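/- arXiv:2602.00963 — 4 statements merged into one kernel-verified Lean document; each statement's English description precedes it below -/
import Mathlib

section
/- Let G be a graph of order n ≥ k+2 with n ≡ k (mod 2) that is k-critical with respect to [1,b]-odd factors (i.e., for every X ⊆ V(G) with |X| = k, G - X has a spanning subgraph H with d_H(v) ∈ {1,3,...,b} for all v). Then G is k-connected. -/
open SimpleGraph

/-- Degree of `v` in `H` (instance-free). -/
noncomputable def degN {V : Type*} (H : SimpleGraph V) (v : V) : ℕ :=
  Nat.card {u // H.Adj v u}

/-- `G` has a spanning subgraph in which every vertex has odd degree at most `b`. -/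
def HasOddFactor {V : Type*} (G : SimpleGraph V) (b : ℕ) : Prop :=
  ∃ H ≤ G, ∀ v, Odd (degN H v) ∧ degN H v ≤ b

/-- `G` is `k`-critical w.r.t. `[1,b]`-odd factors. -/
def KCriticalOdd {V : Type*} [Fintype V] [DecidableEq V]
    (G : SimpleGraph V) (k b : ℕ) : Prop :=
  ∀ X : Finset V, X.card = k → HasOddFactor (G.induce ((Xᶜ : Finset V) : Set V)) b

/-- `G` is `k`-connected. -/
def KConnected {V : Type*} [Fintype V] [DecidableEq V]
    (G : SimpleGraph V) (k : ℕ) : Prop :=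
  k < Fintype.card V ∧
    ∀ X : Finset V, X.card < k → (G.induce ((Xᶜ : Finset V) : Set V)).Connected

/-!
If `G - X` is disconnected for some `|X| < k`, split `V - X` into a union `C` of components and
its nonempty rest, and enlarge `X` to a `k`-set `X'` by deleting vertices from both sides so that
`|C - X'|` is odd. Then `C - X'` is a union of components of `G - X'`, so in an odd factor of
`G - X'` it would be a set of odd size all of whose vertices have odd degree, contradicting the
handshake lemma.
-/

open Finset

lemma degN_induce_of_closed {V : Type*} (H : SimpleGraph V) {s : Set V}
    (hs : ∀ v ∈ s, ∀ w, H.Adj v w → w ∈ s) (v : s) :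
    degN (H.induce s) v = degN H v :=
  Nat.card_congr (Equiv.subtypeSubtypeEquivSubtype fun {w} => hs v v.2 w)

lemma even_card_of_forall_odd_degN {V : Type*} (H : SimpleGraph V) (hodd : ∀ v, Odd (degN H v))
    (S : Finset V) (hS : ∀ v ∈ S, ∀ w, H.Adj v w → w ∈ S) : Even #S := by
  classical
  have hdeg (v : (S : Set V)) : Odd ((H.induce (S : Set V)).degree v) := by
    rw [← card_neighborSet_eq_degree, ← Nat.card_eq_fintype_card]
    exact (degN_induce_of_closed H hS v ▸ hodd v :)
  have := (H.induce (S : Set V)).even_card_odd_degree_vertices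
  rwa [filter_true_of_mem fun v _ => hdeg v, card_univ, ← Nat.card_eq_fintype_card,
    Nat.card_coe_set_eq, Set.ncard_coe_finset] at this

lemma HasOddFactor.even_card_of_closed {V : Type*} {G : SimpleGraph V} {b : ℕ}
    (h : HasOddFactor G b) (S : Finset V) (hS : ∀ v ∈ S, ∀ w, G.Adj v w → w ∈ S) :
    Even #S := by
  obtain ⟨H, hHG, hH⟩ := h
  exact even_card_of_forall_odd_degN H (fun v => (hH v).1) S fun v hv w hvw =>
    hS v hv w (hHG hvw)

lemma HasOddFactor.even_card_inter_of_closed {V : Type*} [DecidableEq V] {G : SimpleGraph V}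
    {s : Finset V} {b : ℕ} (h : HasOddFactor (G.induce (s : Set V)) b) (C : Finset V)
    (hC : ∀ v ∈ C, ∀ w ∈ s, G.Adj v w → w ∈ C) : Even #(C ∩ s) := by
  rw [← filter_mem_eq_inter, ← card_subtype]
  exact h.even_card_of_closed _ fun v hv w hvw =>
    mem_subtype.2 (hC v (mem_subtype.1 hv) w w.2 hvw)

lemma exists_closed_of_not_connected_induce {V : Type*} [DecidableEq V] (G : SimpleGraph V)
    (s : Finset V) (hs : s.Nonempty) (h : ¬ (G.induce (s : Set V)).Connected) :
    ∃ C ⊆ s, C.Nonempty ∧ (s \ C).Nonempty ∧ ∀ v ∈ C, ∀ w ∈ s, G.Adj v w → w ∈ C := by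
  classical
  obtain ⟨u, v, huv⟩ : ∃ u v, ¬ (G.induce (s : Set V)).Reachable u v := by
    by_contra! hpre
    exact h ((connected_iff _).2 ⟨hpre, hs.coe_sort⟩)
  refine ⟨{w ∈ s | ∃ hw : w ∈ s, (G.induce (s : Set V)).Reachable u ⟨w, hw⟩}, filter_subset _ _,
    ⟨u, mem_filter.2 ⟨u.2, u.2, .rfl⟩⟩, ⟨v, mem_sdiff.2 ⟨v.2, fun hv => ?_⟩⟩, ?_⟩
  · obtain ⟨-, _, hreach⟩ := mem_filter.1 hv
    exact huv hreach
  · intro x hx w hw hxw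
    obtain ⟨-, _, hreach⟩ := mem_filter.1 hx
    exact mem_filter.2 ⟨hw, hw, hreach.trans (Adj.reachable (by simpa using hxw))⟩

lemma exists_subset_card_eq_odd_card_sdiff {α : Type*} [DecidableEq α] {s C : Finset α}
    (hCs : C ⊆ s) (hC : C.Nonempty) (hsC : (s \ C).Nonempty) {r : ℕ} (hr₀ : 0 < r)
    (hr : r < #s) : ∃ Y ⊆ s, #Y = r ∧ Odd #(C \ Y) := by
  have hsum : #(s \ C) + #C = #s := card_sdiff_add_card_eq_card hCs
  have hC₀ := hC.card_pos
  have hsC₀ := hsC.card_pos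
  obtain ⟨j, hjr, hjC, hjD, hodd⟩ :
      ∃ j ≤ r, j ≤ #C ∧ r - j ≤ #(s \ C) ∧ Odd (#C - j) := by
    simp only [Nat.odd_iff]
    by_cases h₁ : r < #C
    · by_cases h₂ : (#C - r) % 2 = 1
      · exact ⟨r, le_rfl, h₁.le, by omega, h₂⟩
      · exact ⟨r - 1, by omega, by omega, by omega, by omega⟩
    · exact ⟨#C - 1, by omega, by omega, by omega, by omega⟩
  obtain ⟨Y₁, hY₁C, hY₁⟩ := exists_subset_card_eq hjC
  obtain ⟨Y₂, hY₂D, hY₂⟩ := exists_subset_card_eq hjD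
  have hY₂C : Disjoint C Y₂ := disjoint_of_subset_right hY₂D disjoint_sdiff
  refine ⟨Y₁ ∪ Y₂, union_subset (hY₁C.trans hCs) (hY₂D.trans sdiff_subset), ?_, ?_⟩
  · rw [card_union_of_disjoint (disjoint_of_subset_left hY₁C hY₂C), hY₁, hY₂]
    omega
  · have hCY : C \ (Y₁ ∪ Y₂) = C \ Y₁ := by
      rw [Finset.sdiff_union_distrib, hY₂C.sdiff_eq_left, inter_eq_left.2 sdiff_subset]
    rwa [hCY, card_sdiff_of_subset hY₁C, hY₁]

theorem stmt_2_general {V : Type*} [Fintype V] [DecidableEq V] (G : SimpleGraph V)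
    (b k : ℕ) (hcard : k + 2 ≤ Fintype.card V)
    (hcrit : KCriticalOdd G k b) :
    KConnected G k := by
  refine ⟨by omega, fun X hX => by_contra fun hdisc => ?_⟩
  have hXc : #X + #Xᶜ = Fintype.card V := card_add_card_compl X
  obtain ⟨C, hCX, hC, hD, hclosed⟩ :=
    exists_closed_of_not_connected_induce G Xᶜ (card_pos.1 (by omega)) hdisc
  obtain ⟨Y, hYX, hY, hodd⟩ :=
    exists_subset_card_eq_odd_card_sdiff hCX hC hD (r := k - #X) (by omega) (by omega)
  have hXY : #(X ∪ Y) = k := by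
    rw [card_union_of_disjoint (disjoint_of_subset_right hYX disjoint_compl_right)]
    omega
  have heven := (hcrit _ hXY).even_card_inter_of_closed C fun v hv w hw =>
    hclosed v hv w (compl_subset_compl.2 subset_union_left hw)
  have hCY : C ∩ (X ∪ Y)ᶜ = C \ Y := by
    ext v
    have := @hCX v
    simp only [mem_inter, mem_compl, mem_union, mem_sdiff] at this ⊢
    tauto
  exact Nat.not_even_iff_odd.2 hodd (hCY ▸ heven)

theorem stmt_2 {V : Type*} [Fintype V] [DecidableEq V] (G : SimpleGraph V)
    (b k : ℕ) (hb : 0 < b) (hbodd : b % 2 = 1) (hk : 0 < k)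
    (hcard : k + 2 ≤ Fintype.card V) (hpar : Fintype.card V % 2 = k % 2)
    (hcrit : KCriticalOdd G k b) :
    KConnected G k :=
  stmt_2_general G b k hcard hcrit
end

section
/- Let G be a connected graph and e an edge of G such that G - e is connected. Then the distance signless Laplacian spectral radius satisfies η₁(G - e) > η₁(G). -/
open SimpleGraph

/-- Largest real eigenvalue (for symmetric matrices) as the sup of the real spectrum. -/
noncomputable def maxEig {n : Type*} [Fintype n] [DecidableEq n] (M : Matrix n n ℝ) : ℝ :=
  sSup (spectrum ℝ M)

/-- The distance matrix of a graph. -/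
noncomputable def distMatrix {V : Type*} [Fintype V] (G : SimpleGraph V) : Matrix V V ℝ :=
  Matrix.of fun i j => (G.dist i j : ℝ)

/-- The transmission of a vertex: the sum of distances to all vertices. -/
noncomputable def transmission {V : Type*} [Fintype V] (G : SimpleGraph V) (v : V) : ℕ :=
  ∑ u, G.dist v u

/-- The distance signless Laplacian matrix `Tr(G) + D(G)`. -/
noncomputable def qdMatrix {V : Type*} [Fintype V] [DecidableEq V]
    (G : SimpleGraph V) : Matrix V V ℝ :=
  Matrix.diagonal (fun v => (transmission G v : ℝ)) + distMatrix G

/-! The off-diagonal entries of `Q_D(G)` are positive, so its largest eigenvalue has an eigenvector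
`y` with positive entries: for a top eigenvector `x`, the vector `|x|` has at least the same
Rayleigh quotient, hence maximises it and is itself an eigenvector, and then the eigenvalue
equation forces all its entries to be positive. Deleting the edge `e = uv` decreases no distance
and raises `d(u, v)` from `1` to at least `2`, so `Q_D(G) ≤ Q_D(G - e)` entrywise, strictly at
`(u, v)`. Therefore `η₁(G) = yᵀ Q_D(G) y / yᵀy < yᵀ Q_D(G - e) y / yᵀy ≤ η₁(G - e)`. -/

open scoped Matrix

lemma Matrix.smul_one_sub_mulVec {n R : Type*} [Fintype n] [DecidableEq n] [CommRing R] (c : R)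
    (M : Matrix n n R) (y : n → R) : (c • 1 - M) *ᵥ y = c • y - M *ᵥ y := by
  rw [Matrix.sub_mulVec, Matrix.smul_mulVec, Matrix.one_mulVec]

namespace Matrix.IsHermitian

variable {n : Type*} [Fintype n] [DecidableEq n] {M : Matrix n n ℝ}

lemma eigenvalues_le_maxEig (hM : M.IsHermitian) (i : n) : hM.eigenvalues i ≤ maxEig M := by
  rw [maxEig, hM.spectrum_real_eq_range_eigenvalues]
  exact le_csSup (Set.finite_range _).bddAbove ⟨i, rfl⟩

lemma exists_eigenvalues_eq_maxEig (hM : M.IsHermitian) [Nonempty n] :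
    ∃ i, hM.eigenvalues i = maxEig M := by
  rw [maxEig, hM.spectrum_real_eq_range_eigenvalues]
  exact (Set.range_nonempty _).csSup_mem (Set.finite_range _)

lemma posSemidef_maxEig_smul_one_sub (hM : M.IsHermitian) : (maxEig M • 1 - M).PosSemidef := by
  have hconj : maxEig M • 1 - M = Unitary.conjStarAlgAut ℝ _ hM.eigenvectorUnitary
      (diagonal fun i => maxEig M - hM.eigenvalues i) := by
    have hdiag : diagonal (fun i => maxEig M - hM.eigenvalues i)
        = maxEig M • 1 - diagonal (RCLike.ofReal ∘ hM.eigenvalues) := by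
      rw [smul_one_eq_diagonal, diagonal_sub]
      rfl
    rw [hdiag, map_sub, map_smul, map_one, ← hM.spectral_theorem]
  rw [hconj, Unitary.conjStarAlgAut_apply]
  exact (PosSemidef.diagonal fun i => sub_nonneg.mpr (hM.eigenvalues_le_maxEig i))
    |>.mul_mul_conjTranspose_same _

lemma dotProduct_mulVec_le_maxEig (hM : M.IsHermitian) (y : n → ℝ) :
    y ⬝ᵥ (M *ᵥ y) ≤ maxEig M * (y ⬝ᵥ y) := by
  have := hM.posSemidef_maxEig_smul_one_sub.dotProduct_mulVec_nonneg y
  rwa [star_trivial, smul_one_sub_mulVec, dotProduct_sub, dotProduct_smul, smul_eq_mul,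
    sub_nonneg] at this

lemma mulVec_eq_maxEig_smul (hM : M.IsHermitian) {y : n → ℝ}
    (hy : y ⬝ᵥ (M *ᵥ y) = maxEig M * (y ⬝ᵥ y)) : M *ᵥ y = maxEig M • y := by
  have := (hM.posSemidef_maxEig_smul_one_sub.dotProduct_mulVec_zero_iff y).mp <| by
    rw [star_trivial, smul_one_sub_mulVec, dotProduct_sub, dotProduct_smul, smul_eq_mul, hy,
      sub_self]
  rw [smul_one_sub_mulVec, sub_eq_zero] at this
  exact this.symm

lemma exists_mulVec_eq_maxEig_smul (hM : M.IsHermitian) [Nonempty n] :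
    ∃ x : n → ℝ, x ≠ 0 ∧ M *ᵥ x = maxEig M • x := by
  obtain ⟨i, hi⟩ := hM.exists_eigenvalues_eq_maxEig
  refine ⟨hM.eigenvectorBasis i, ?_, hi ▸ hM.mulVec_eigenvectorBasis i⟩
  simpa using hM.eigenvectorBasis.orthonormal.ne_zero i

end Matrix.IsHermitian

namespace Matrix

variable {n : Type*} [Fintype n]

lemma dotProduct_mulVec_eq_sum {R : Type*} [NonUnitalSemiring R] (M : Matrix n n R) (y : n → R) :
    y ⬝ᵥ (M *ᵥ y) = ∑ i, ∑ j, y i * M i j * y j := by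
  simp only [dotProduct, mulVec, Finset.mul_sum, mul_assoc]

lemma pos_of_mulVec_eq_smul {M : Matrix n n ℝ} {μ : ℝ} {y : n → ℝ} (hM0 : ∀ i j, 0 ≤ M i j)
    (hMpos : Pairwise fun i j => 0 < M i j) (hy : y ≠ 0) (hy0 : 0 ≤ y) (hMy : M *ᵥ y = μ • y)
    (i : n) : 0 < y i := by
  obtain ⟨k, hk⟩ := Function.ne_iff.mp hy
  have hk : 0 < y k := (hy0 k).lt_of_ne' hk
  rcases eq_or_ne i k with rfl | hik
  · exact hk
  refine (hy0 i).lt_of_ne' fun hi => ?_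
  have : 0 < (M *ᵥ y) i := Finset.sum_pos' (fun j _ => mul_nonneg (hM0 i j) (hy0 j))
    ⟨k, Finset.mem_univ k, mul_pos (hMpos hik) hk⟩
  simp [hMy, hi] at this

variable [DecidableEq n]

lemma IsHermitian.exists_nonneg_mulVec_eq_maxEig_smul {M : Matrix n n ℝ} (hM : M.IsHermitian)
    (hM0 : ∀ i j, 0 ≤ M i j) [Nonempty n] :
    ∃ y : n → ℝ, y ≠ 0 ∧ 0 ≤ y ∧ M *ᵥ y = maxEig M • y := by
  obtain ⟨x, hx0, hx⟩ := hM.exists_mulVec_eq_maxEig_smul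
  refine ⟨|x|, by simpa using hx0, abs_nonneg x,
    hM.mulVec_eq_maxEig_smul (le_antisymm (hM.dotProduct_mulVec_le_maxEig _) ?_)⟩
  have habs : |x| ⬝ᵥ |x| = x ⬝ᵥ x := by simp [dotProduct, abs_mul_abs_self]
  calc maxEig M * (|x| ⬝ᵥ |x|) = x ⬝ᵥ (M *ᵥ x) := by rw [habs, hx, dotProduct_smul, smul_eq_mul]
    _ ≤ |x| ⬝ᵥ (M *ᵥ |x|) := by
      rw [dotProduct_mulVec_eq_sum, dotProduct_mulVec_eq_sum]
      refine Finset.sum_le_sum fun i _ => Finset.sum_le_sum fun j _ => ?_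
      calc x i * M i j * x j ≤ |x i * M i j * x j| := le_abs_self _
        _ = |x| i * M i j * |x| j := by rw [abs_mul, abs_mul, abs_of_nonneg (hM0 i j)]; rfl

theorem maxEig_lt_maxEig_of_le_of_lt {M N : Matrix n n ℝ} (hM : M.IsHermitian)
    (hN : N.IsHermitian) (hM0 : ∀ i j, 0 ≤ M i j) (hMpos : Pairwise fun i j => 0 < M i j)
    (hMN : ∀ i j, M i j ≤ N i j) {a b : n} (hab : M a b < N a b) : maxEig M < maxEig N := by
  have : Nonempty n := ⟨a⟩
  obtain ⟨y, hy, hy0, hMy⟩ := hM.exists_nonneg_mulVec_eq_maxEig_smul hM0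
  have hpos := pos_of_mulVec_eq_smul hM0 hMpos hy hy0 hMy
  have hyy : 0 < y ⬝ᵥ y :=
    Finset.sum_pos (fun i _ => mul_pos (hpos i) (hpos i)) Finset.univ_nonempty
  have hterm (i j : n) : y i * M i j * y j ≤ y i * N i j * y j :=
    mul_le_mul_of_nonneg_right (mul_le_mul_of_nonneg_left (hMN i j) (hpos i).le) (hpos j).le
  refine lt_of_mul_lt_mul_right ?_ hyy.le
  calc maxEig M * (y ⬝ᵥ y) = y ⬝ᵥ (M *ᵥ y) := by rw [hMy, dotProduct_smul, smul_eq_mul]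
    _ < y ⬝ᵥ (N *ᵥ y) := by
      rw [dotProduct_mulVec_eq_sum, dotProduct_mulVec_eq_sum]
      refine Finset.sum_lt_sum (fun i _ => Finset.sum_le_sum fun j _ => hterm i j)
        ⟨a, Finset.mem_univ a, Finset.sum_lt_sum (fun j _ => hterm a j) ⟨b, Finset.mem_univ b, ?_⟩⟩
      exact mul_lt_mul_of_pos_right (mul_lt_mul_of_pos_left hab (hpos a)) (hpos b)
    _ ≤ maxEig N * (y ⬝ᵥ y) := hN.dotProduct_mulVec_le_maxEig y

end Matrix

namespace SimpleGraph

lemma dist_lt_dist_deleteEdges {V : Type*} {G : SimpleGraph V} {u v : V} (huv : G.Adj u v)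
    (hr : (G.deleteEdges {s(u, v)}).Reachable u v) :
    G.dist u v < (G.deleteEdges {s(u, v)}).dist u v := by
  rw [dist_eq_one_iff_adj.mpr huv]
  exact hr.one_lt_dist_of_ne_of_not_adj huv.ne (by simp)

variable {V : Type*} [Fintype V] [DecidableEq V]

lemma qdMatrix_apply (G : SimpleGraph V) (i j : V) :
    qdMatrix G i j = (if i = j then (transmission G i : ℝ) else 0) + G.dist i j := by
  simp [qdMatrix, distMatrix, Matrix.diagonal_apply]

lemma qdMatrix_apply_of_ne (G : SimpleGraph V) {i j : V} (h : i ≠ j) :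
    qdMatrix G i j = G.dist i j := by
  rw [qdMatrix_apply, if_neg h, zero_add]

lemma isHermitian_qdMatrix (G : SimpleGraph V) : (qdMatrix G).IsHermitian := by
  ext i j
  simp only [Matrix.conjTranspose_apply, star_trivial, qdMatrix_apply, dist_comm, eq_comm]
  split_ifs with h <;> simp [h]

lemma qdMatrix_nonneg (G : SimpleGraph V) (i j : V) : 0 ≤ qdMatrix G i j := by
  rw [qdMatrix_apply]
  positivity

lemma Connected.qdMatrix_pos {G : SimpleGraph V} (hG : G.Connected) :
    Pairwise fun i j => 0 < qdMatrix G i j := fun i j h => by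
  change 0 < qdMatrix G i j
  rw [qdMatrix_apply_of_ne G h]
  exact_mod_cast hG.pos_dist_of_ne h

lemma Preconnected.qdMatrix_anti {G H : SimpleGraph V} (hH : H.Preconnected) (hHG : H ≤ G)
    (i j : V) : qdMatrix G i j ≤ qdMatrix H i j := by
  have hdist (u v : V) : G.dist u v ≤ H.dist u v := (hH u v).dist_anti hHG
  rw [qdMatrix_apply, qdMatrix_apply]
  refine add_le_add ?_ (mod_cast hdist i j)
  split_ifs
  · exact_mod_cast Finset.sum_le_sum fun v _ => hdist i v
  · rfl

end SimpleGraph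

theorem stmt_5 {V : Type*} [Fintype V] [DecidableEq V] (G : SimpleGraph V)
    (hG : G.Connected) (e : Sym2 V) (he : e ∈ G.edgeSet)
    (hconn : (G.deleteEdges {e}).Connected) :
    maxEig (qdMatrix G) < maxEig (qdMatrix (G.deleteEdges {e})) := by
  induction e using Sym2.ind with
  | h u v =>
    have huv : G.Adj u v := he
    refine Matrix.maxEig_lt_maxEig_of_le_of_lt (isHermitian_qdMatrix G) (isHermitian_qdMatrix _)
      (qdMatrix_nonneg G) hG.qdMatrix_pos
      (hconn.preconnected.qdMatrix_anti (deleteEdges_le _)) (a := u) (b := v) ?_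
    rw [qdMatrix_apply_of_ne _ huv.ne, qdMatrix_apply_of_ne _ huv.ne]
    exact_mod_cast dist_lt_dist_deleteEdges huv (hconn u v)
end

section
/- The graph G' = K_δ ∨ (K_{n-(b+1)δ+bk-1} ∪ (bδ-bk+1)K₁) (with n ≥ (b+1)δ - bk + 2, b odd, n ≡ k (mod 2), δ ≥ k+1) is not k-critical with respect to [1,b]-odd factors. -/
open SimpleGraph

/-- The graph `K_a ∨ (K_m ∪ t•K₁)` on `Fin (a + m + t)`: the first `a` vertices
form a dominating clique, the next `m` a clique, the last `t` an independent set. -/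
def jGraph (a m t : ℕ) : SimpleGraph (Fin (a + m + t)) :=
  SimpleGraph.fromRel (fun i j => i.val < a ∨ (i.val < a + m ∧ j.val < a + m))

/-!
Delete the `k` vertices of smallest index, all in the dominating clique `K_δ`. Each of the
`t = b(δ - k) + 1` isolated vertices of `G'` must still have an edge of the odd factor, and that
edge goes to one of the `δ - k` surviving vertices of `K_δ`, each of which carries at most `b`
factor edges. Double counting these edges gives `t ≤ b(δ - k)`, a contradiction.
-/

open Finset

namespace HasOddFactor

variable {V : Type*} [Fintype V] {G : SimpleGraph V} {b : ℕ}

theorem card_le_mul_card (hG : HasOddFactor G b) {I D : Finset V}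
    (hID : ∀ w ∈ I, ∀ u, G.Adj w u → u ∈ D) : #I ≤ b * #D := by
  classical
  obtain ⟨H, hHG, hH⟩ := hG
  have hneighbor : ∀ w ∈ I, 1 ≤ #(D.bipartiteAbove H.Adj w) := by
    intro w hw
    obtain ⟨⟨u, hu⟩⟩ := (Nat.card_pos_iff.mp (hH w).1.pos).1
    exact card_pos.mpr ⟨u, mem_filter.mpr ⟨hID w hw u (hHG hu), hu⟩⟩
  have hdegree : ∀ d ∈ D, #(I.bipartiteBelow H.Adj d) ≤ b := by
    intro d _
    calc #(I.bipartiteBelow H.Adj d) ≤ #({u | H.Adj d u} : Finset V) :=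
          card_le_card fun w hw => by simpa [H.adj_comm] using (mem_filter.mp hw).2
      _ = degN H d := by rw [degN, Nat.card_eq_fintype_card, Fintype.card_subtype]
      _ ≤ b := (hH d).2
  simpa [mul_comm] using card_mul_le_card_mul H.Adj hneighbor hdegree

theorem card_le_mul_card_of_induce {s : Set V} (hG : HasOddFactor (G.induce s) b)
    {I D : Finset V} (hIs : ↑I ⊆ s) (hID : ∀ w ∈ I, ∀ u ∈ s, G.Adj w u → u ∈ D) :
    #I ≤ b * #D := by
  classical
  calc #I = #(I.subtype (· ∈ s)) := by rw [card_subtype, filter_true_of_mem fun w hw => hIs hw]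
    _ ≤ b * #(D.subtype (· ∈ s)) :=
        hG.card_le_mul_card fun w hw u hu => by
          simp only [mem_subtype] at hw ⊢
          exact hID w hw u u.2 (comap_adj.mp hu)
    _ ≤ b * #D := by
        gcongr
        rw [card_subtype]
        exact card_filter_le _ _

end HasOddFactor

theorem jGraph_adj_val_lt {a m t : ℕ} {i j : Fin (a + m + t)} (hi : a + m ≤ i.val)
    (hij : (jGraph a m t).Adj i j) : j.val < a := by
  rw [jGraph, fromRel_adj] at hij
  omega

theorem stmt_11_general (b k δ m t : ℕ)
    (hδk : k + 1 ≤ δ)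
    (ht : (t : ℤ) = (b : ℤ) * δ - b * k + 1) :
    ¬ KCriticalOdd (jGraph δ m t) k b := by
  intro hcrit
  set X := ({v | v.val < k} : Finset (Fin (δ + m + t)))
  have hX : #X = k := by rw [Fin.card_filter_val_lt]; omega
  set I := ({v | v.val < δ + m} : Finset (Fin (δ + m + t)))ᶜ
  set D := ({v | v.val < δ} : Finset (Fin (δ + m + t))) \ X
  have hI : #I = t := by rw [card_compl, Fin.card_filter_val_lt, Fintype.card_fin]; omega
  have hD : #D = δ - k := by
    rw [card_sdiff_of_subset fun v hv => by simp [X] at hv ⊢; omega, hX,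
      Fin.card_filter_val_lt]
    omega
  have hcount : #I ≤ b * #D := (hcrit X hX).card_le_mul_card_of_induce
    (fun w hw => by simp [I, X] at hw ⊢; omega)
    (fun w hw u hu hwu => by
      have := jGraph_adj_val_lt (by simpa [I] using hw) hwu
      simp [D, X] at hu ⊢; omega)
  rw [hI, hD] at hcount
  zify [show k ≤ δ by omega] at hcount
  linarith

theorem stmt_11 (b k δ n m t : ℕ) (hb : 0 < b) (hk : 0 < k) (hδ : 0 < δ) (hn : 0 < n)
    (hbodd : b % 2 = 1) (hpar : n % 2 = k % 2) (hδk : k + 1 ≤ δ)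
    (hm : (m : ℤ) = (n : ℤ) - (b + 1) * δ + b * k - 1)
    (ht : (t : ℤ) = (b : ℤ) * δ - b * k + 1)
    (hm1 : 1 ≤ m) (ht1 : 1 ≤ t)
    (hnbig : ((b : ℤ) + 1) * δ - b * k + 2 ≤ n) :
    ¬ KCriticalOdd (jGraph δ m t) k b :=
  stmt_11_general b k δ m t hδk ht
end

section
/- Let b, δ, k, n be positive integers with δ ≥ k+1, b ≥ k, k ≥ 1, and n ≥ 2(b²+2b)δ² + 2δ + 2b²k². Then for G' = K_δ ∨ (K_{n-(b+1)δ+bk-1} ∪ (bδ-bk+1)K₁) one has η₁(G') > 2n + 4bδ - 4bk + 1. -/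
/-!
The all-ones vector in the Rayleigh quotient of the distance signless Laplacian gives
`η₁(G) ≥ 4 W(G) / n`. In `K_δ ∨ (K_m ∪ t K₁)` any two vertices are at distance at most `2`
through the dominating clique, and the pairs at distance `2` are those inside the independent
set of size `t` and those between it and `K_m`; hence `2 W = n² - n + 2mt + t² - t`.
With `m = n - δ - t` and `t = b(δ - k) + 1` the bound `4W/n` exceeds `2n + 4bδ - 4bk + 1`
by `2 (n - 4tδ - 2t² - 2t) / n`, which is positive under the size condition on `n`.
-/

open SimpleGraph

/-- The Wiener index: the sum of distances over unordered pairs. -/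
noncomputable def wiener {V : Type*} [Fintype V] (G : SimpleGraph V) : ℝ :=
  (1 / 2 : ℝ) * ∑ i, ∑ j, (G.dist i j : ℝ)

open Finset Matrix
open scoped MatrixOrder

lemma le_maxEig {n : Type*} [Fintype n] [DecidableEq n] {M : Matrix n n ℝ} {x : ℝ}
    (hx : x ∈ spectrum ℝ M) : x ≤ maxEig M :=
  le_csSup M.finite_real_spectrum.bddAbove hx

/-- `M ≤ maxEig M • 1` in the Loewner order, since no eigenvalue exceeds `maxEig M`. -/
lemma dotProduct_mulVec_le_maxEig_mul {n : Type*} [Fintype n] [DecidableEq n]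
    {M : Matrix n n ℝ} (hM : M.IsHermitian) (x : n → ℝ) :
    x ⬝ᵥ M *ᵥ x ≤ maxEig M * (x ⬝ᵥ x) := by
  have hle : M ≤ algebraMap ℝ _ (maxEig M) :=
    le_algebraMap_of_spectrum_le (fun _ hr => le_maxEig hr) hM.isSelfAdjoint
  simpa [sub_mulVec, Algebra.algebraMap_eq_smul_one, smul_mulVec, dotProduct_sub, sub_nonneg]
    using (le_iff.mp hle).dotProduct_mulVec_nonneg x

section DistanceSignlessLaplacian

variable {V : Type*} [Fintype V] [DecidableEq V] (G : SimpleGraph V)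

lemma qdMatrix_isHermitian : (qdMatrix G).IsHermitian :=
  (isHermitian_diagonal _).add <| IsHermitian.ext fun i j => by
    simp [distMatrix, SimpleGraph.dist_comm]

lemma sum_sum_qdMatrix : ∑ i, ∑ j, qdMatrix G i j = 4 * wiener G := by
  simp [qdMatrix, distMatrix, wiener, transmission, diagonal_apply, sum_add_distrib]
  ring

lemma four_mul_wiener_le_maxEig_qdMatrix_mul_card :
    4 * wiener G ≤ maxEig (qdMatrix G) * Fintype.card V := by
  simpa [dotProduct, mulVec, sum_sum_qdMatrix] using
    dotProduct_mulVec_le_maxEig_mul (qdMatrix_isHermitian G) (fun _ => 1)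

lemma lt_maxEig_qdMatrix_of_mul_card_lt {c : ℝ} (h : c * Fintype.card V < 4 * wiener G) :
    c < maxEig (qdMatrix G) := by
  by_contra! hle
  nlinarith [four_mul_wiener_le_maxEig_qdMatrix_mul_card G,
    mul_le_mul_of_nonneg_right hle (Nat.cast_nonneg (α := ℝ) (Fintype.card V))]

end DistanceSignlessLaplacian

lemma SimpleGraph.dist_eq_two_of_mem_commonNeighbors {V : Type*} {G : SimpleGraph V} {u v w : V}
    (huv : u ≠ v) (hadj : ¬G.Adj u v) (hw : w ∈ G.commonNeighbors u v) : G.dist u v = 2 := by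
  simp [SimpleGraph.dist, G.edist_eq_two_iff.mpr ⟨huv, hadj, w, hw⟩]

def icoIndicator (a b : ℕ) {N : ℕ} (i : Fin N) : ℝ :=
  if (i : ℕ) ∈ Ico a b then 1 else 0

lemma sum_icoIndicator {a b N : ℕ} (hab : a ≤ b) (hbN : b ≤ N) :
    ∑ i : Fin N, icoIndicator a b i = b - a := by
  simp only [icoIndicator]
  rw [Fin.sum_univ_eq_sum_range (fun x => if x ∈ Ico a b then (1 : ℝ) else 0), sum_ite_mem,
    inter_eq_right.mpr (fun x hx => mem_range.mpr ((mem_Ico.mp hx).2.trans_le hbN)),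
    sum_const, Nat.card_Ico, nsmul_one, Nat.cast_sub hab]

/-- Distinct vertices are at distance `2` exactly when both lie outside the dominating clique
`[0, a)` and not both in the clique `[a, a + m)`; vertex `0` is then a common neighbour. -/
lemma jGraph_dist_eq {a m t : ℕ} (ha : 0 < a) (i j : Fin (a + m + t)) :
    ((jGraph a m t).dist i j : ℝ) =
      1 - (if i = j then 1 else 0) + icoIndicator a (a + m + t) i * icoIndicator a (a + m + t) j
        - icoIndicator a (a + m) i * icoIndicator a (a + m) j
        - (if i = j then 1 else 0) * icoIndicator (a + m) (a + m + t) i := by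
  by_cases hij : i = j
  · subst hij
    simp only [dist_self, icoIndicator, mem_Ico]
    split_ifs <;> first | omega | norm_num
  by_cases hadj : (jGraph a m t).Adj i j
  · rw [dist_eq_one_iff_adj.mpr hadj]
    simp only [jGraph, fromRel_adj] at hadj
    simp only [icoIndicator, mem_Ico, hij, if_false]
    split_ifs <;> first | omega | norm_num
  · have hcommon : (⟨0, by omega⟩ : Fin (a + m + t)) ∈ (jGraph a m t).commonNeighbors i j := by
      simp only [jGraph, fromRel_adj] at hadj
      simp only [mem_commonNeighbors, jGraph, fromRel_adj, ne_eq, Fin.ext_iff]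
      omega
    rw [dist_eq_two_of_mem_commonNeighbors hij hadj hcommon]
    simp only [jGraph, fromRel_adj] at hadj
    simp only [icoIndicator, mem_Ico, hij, if_false]
    split_ifs <;> first | omega | norm_num

lemma four_mul_wiener_jGraph {a m t : ℕ} (ha : 0 < a) :
    4 * wiener (jGraph a m t) =
      2 * (((a + m + t : ℕ) : ℝ) ^ 2 - (a + m + t : ℕ) + 2 * m * t + t ^ 2 - t) := by
  simp only [wiener, jGraph_dist_eq ha, sum_add_distrib, sum_sub_distrib, ← mul_sum, ← sum_mul,
    mul_one, sum_ite_eq, mem_univ, if_true, sum_const, card_univ, Fintype.card_fin, nsmul_eq_mul]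
  rw [sum_icoIndicator (by omega) le_rfl, sum_icoIndicator (by omega) (by omega),
    sum_icoIndicator (by omega) le_rfl]
  push_cast
  ring

lemma excess_lt_threshold {b k δ t : ℤ} (hk : 1 ≤ k) (hδk : k + 1 ≤ δ) (hbk : k ≤ b)
    (ht : t = b * δ - b * k + 1) :
    4 * t * δ + 2 * t ^ 2 + 2 * t < 2 * (b ^ 2 + 2 * b) * δ ^ 2 + 2 * δ + 2 * b ^ 2 * k ^ 2 := by
  subst ht
  have hbδ : 0 ≤ b * δ := mul_nonneg (by linarith) (by linarith)
  nlinarith [mul_le_mul_of_nonneg_left hk hbδ, mul_le_mul_of_nonneg_left (hk.trans hbk) hbδ,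
    mul_le_mul_of_nonneg_left (hk.trans hbk) (by linarith : (0 : ℤ) ≤ δ)]

theorem stmt_14_general (b k δ n m t : ℕ) (hk : 0 < k)
    (hδk : k + 1 ≤ δ) (hbk : k ≤ b)
    (hm : (m : ℤ) = (n : ℤ) - (b + 1) * δ + b * k - 1)
    (ht : (t : ℤ) = (b : ℤ) * δ - b * k + 1)
    (hnbig : 2 * ((b : ℤ) ^ 2 + 2 * b) * δ ^ 2 + 2 * δ + 2 * b ^ 2 * k ^ 2 ≤ n) :
    2 * (n : ℝ) + 4 * b * δ - 4 * b * k + 1 < maxEig (qdMatrix (jGraph δ m t)) := by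
  apply lt_maxEig_qdMatrix_of_mul_card_lt
  rw [Fintype.card_fin, four_mul_wiener_jGraph (by omega)]
  have hexcess : 4 * (t : ℤ) * δ + 2 * t ^ 2 + 2 * t < n :=
    (excess_lt_threshold (by exact_mod_cast hk) (by exact_mod_cast hδk) (by exact_mod_cast hbk)
      ht).trans_le hnbig
  have hcard : ((δ + m + t : ℕ) : ℤ) = n := by push_cast; linarith
  have key : (2 * n + 4 * b * δ - 4 * b * k + 1) * (n : ℤ) <
      2 * ((n : ℤ) ^ 2 - n + 2 * m * t + t ^ 2 - t) := by
    have hm' : (m : ℤ) = n - δ - t := by linarith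
    linear_combination hexcess - 4 * n * ht - 4 * t * hm'
  rw [show ((δ + m + t : ℕ) : ℝ) = n by exact_mod_cast hcard]
  exact_mod_cast key

theorem stmt_14 (b k δ n m t : ℕ) (hb : 0 < b) (hk : 0 < k) (hδ : 0 < δ) (hn : 0 < n)
    (hδk : k + 1 ≤ δ) (hbk : k ≤ b)
    (hm : (m : ℤ) = (n : ℤ) - (b + 1) * δ + b * k - 1)
    (ht : (t : ℤ) = (b : ℤ) * δ - b * k + 1)
    (hm1 : 1 ≤ m) (ht1 : 1 ≤ t)
    (hnbig : 2 * ((b : ℤ) ^ 2 + 2 * b) * δ ^ 2 + 2 * δ + 2 * b ^ 2 * k ^ 2 ≤ n) :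
    2 * (n : ℝ) + 4 * b * δ - 4 * b * k + 1 < maxEig (qdMatrix (jGraph δ m t)) :=
  stmt_14_general b k δ n m t hk hδk hbk hm ht hnbig
end
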